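/- arXiv:2309.05612 — 10 statements merged into one kernel-verified Lean document; each statement's English description precedes it below -/
import Mathlib

section
/- Let n, m, t be integers with 1 ≤ m ≤ n and 0 ≤ t ≤ m−1. Then the flag-shaped set B_n(m,t) is a blocker of all n×n 123-avoiding permutation matrices; that is, for every 123-avoiding permutation σ of {1,…,n} there exists an index i with (i, σ(i)) ∈ B_n(m,t). -/
/-- A permutation of `Fin n` is `123`-avoiding if it has no increasing
subsequence of length 3. -/
def Avoids123 {n : ℕ} (σ : Equiv.Perm (Fin n)) : Prop :=
  ∀ i j k : Fin n, i < j → j < k → σ i < σ j → ¬ σ j < σ k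

/-- A set of positions is a blocker of all `n × n` `123`-avoiding permutation
matrices if every `123`-avoiding permutation meets it. -/
def IsBlocker {n : ℕ} (B : Set (Fin n × Fin n)) : Prop :=
  ∀ σ : Equiv.Perm (Fin n), Avoids123 σ → ∃ i : Fin n, (i, σ i) ∈ B

/-- The flag-shaped blocker `B_n(m,t)` (with `1`-based row/column indices
`i+1`, `j+1` for `(i,j) : Fin n × Fin n`): the "pole"
`{(i,m) : 1 ≤ i ≤ n-t}` together with the "flag"
`{(i,j) : 1 ≤ i ≤ n-m+1, m-t ≤ j ≤ m-1}`. -/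
def FlagBlocker (n m t : ℕ) : Set (Fin n × Fin n) :=
  {p | ((p.2 : ℕ) + 1 = m ∧ (p.1 : ℕ) + 1 + t ≤ n) ∨
       ((p.1 : ℕ) + m ≤ n ∧ m ≤ (p.2 : ℕ) + 1 + t ∧ (p.2 : ℕ) + 2 ≤ m)}

/-- The permutation matrix of `σ`: the real `(0,1)`-matrix with a `1` in
position `(i, j)` exactly when `j = σ i`. -/
def permMatrix (n : ℕ) (σ : Equiv.Perm (Fin n)) : Matrix (Fin n) (Fin n) ℝ :=
  fun i j => if σ i = j then 1 else 0

/-!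
Let `c` be column `m - 1` (0-based) and `r = σ⁻¹ c`. If `r` is among the first `n - t` rows,
`(r, c)` lies on the pole. Otherwise fewer than `t` rows lie below `r`, so at least `m - t` of
the `m - 1` entries left of column `c` lie above row `r`, i.e. northwest of `(r, c)`. Avoiding
`123` forces these northwest entries to decrease, so the topmost one, in row `i₀`, sits in a
column `≥ m - t - 1`; and every row above `i₀` has its entry right of column `c`, so
`i₀ ≤ n - m`. Hence `(i₀, σ i₀)` lies in the flag.
-/

open Finset

theorem Avoids123.apply_le_of_lt_of_lt {n : ℕ} {σ : Equiv.Perm (Fin n)} (hσ : Avoids123 σ)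
    {i j k : Fin n} (hij : i < j) (hjk : j < k) (h : σ j < σ k) : σ j ≤ σ i :=
  le_of_not_gt fun hlt => hσ i j k hij hjk hlt h

namespace Equiv.Perm

variable {n : ℕ} (σ : Equiv.Perm (Fin n)) (c : Fin n)

def northwestRows : Finset (Fin n) :=
  {i | i < σ.symm c ∧ σ i < c}

variable {σ c}

theorem mem_northwestRows {i : Fin n} :
    i ∈ σ.northwestRows c ↔ i < σ.symm c ∧ σ i < c := by
  simp [northwestRows]

variable (σ c)

theorem val_le_card_northwestRows_add :
    (c : ℕ) ≤ #(σ.northwestRows c) + (n - 1 - σ.symm c) := by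
  have hsub : (Iio c).image σ.symm ⊆ σ.northwestRows c ∪ Ioi (σ.symm c) := by
    simp only [subset_iff, mem_image, mem_Iio, mem_union, mem_Ioi, mem_northwestRows]
    rintro _ ⟨j, hj, rfl⟩
    rcases lt_trichotomy (σ.symm j) (σ.symm c) with h | h | h
    · exact Or.inl ⟨h, by simpa using hj⟩
    · exact absurd (σ.symm.injective h) hj.ne
    · exact Or.inr h
  calc (c : ℕ) = #((Iio c).image σ.symm) := by
        rw [card_image_of_injective _ σ.symm.injective, Fin.card_Iio]
    _ ≤ #(σ.northwestRows c ∪ Ioi (σ.symm c)) := card_le_card hsub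
    _ ≤ #(σ.northwestRows c) + (n - 1 - σ.symm c) := by
        rw [← Fin.card_Ioi]; exact card_union_le _ _

variable {σ c}

theorem card_northwestRows_le (hσ : Avoids123 σ) (h : (σ.northwestRows c).Nonempty) :
    #(σ.northwestRows c) ≤ σ ((σ.northwestRows c).min' h) + 1 := by
  set i₀ := (σ.northwestRows c).min' h
  have hmaps : ∀ j ∈ σ.northwestRows c, σ j ∈ Iic (σ i₀) := by
    intro j hj
    rcases (min'_le _ j hj).eq_or_lt with heq | hlt
    · simp [i₀, heq]
    · have hj' := mem_northwestRows.1 hj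
      exact mem_Iic.2 (hσ.apply_le_of_lt_of_lt hlt hj'.1 (by simpa using hj'.2))
  calc #(σ.northwestRows c) ≤ #(Iic (σ i₀)) := card_le_card_of_injOn σ hmaps σ.injective.injOn
    _ = σ i₀ + 1 := Fin.card_Iic _

/-- Every row above the topmost northwest row has its entry east of column `c`. -/
theorem min'_northwestRows_add_val_lt (h : (σ.northwestRows c).Nonempty) :
    ((σ.northwestRows c).min' h : ℕ) + c < n := by
  set i₀ := (σ.northwestRows c).min' h
  have hi₀ : i₀ < σ.symm c := (mem_northwestRows.1 (min'_mem _ h)).1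
  have hmaps : ∀ i ∈ Iio i₀, σ i ∈ Ioi c := by
    intro i hi
    have hir : i < σ.symm c := (mem_Iio.1 hi).trans hi₀
    have hnw : ¬ σ i < c := fun hlt =>
      (mem_Iio.1 hi).not_ge (min'_le _ i (mem_northwestRows.2 ⟨hir, hlt⟩))
    have hne : σ i ≠ c := fun heq => hir.ne (by simp [← heq])
    exact mem_Ioi.2 (lt_of_le_of_ne (not_lt.1 hnw) hne.symm)
  have hcard := card_le_card_of_injOn σ hmaps σ.injective.injOn
  rw [Fin.card_Iio, Fin.card_Ioi] at hcard
  omega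

end Equiv.Perm

open Equiv.Perm in
theorem flagBlocker_isBlocker_general (n m t : ℕ) (hmn : m ≤ n)
    (ht : t + 1 ≤ m) :
    IsBlocker (FlagBlocker n m t) := by
  intro σ hσ
  set c : Fin n := ⟨m - 1, by omega⟩
  have hc : (c : ℕ) = m - 1 := rfl
  by_cases hpole : (σ.symm c : ℕ) + 1 + t ≤ n
  · exact ⟨σ.symm c, Or.inl ⟨by rw [Equiv.apply_symm_apply, hc]; omega, hpole⟩⟩
  have hcount := val_le_card_northwestRows_add σ c
  have hne : (σ.northwestRows c).Nonempty := card_pos.1 (by omega)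
  have hleft := (mem_northwestRows.1 (min'_mem _ hne)).2
  have hcol := card_northwestRows_le hσ hne
  have hrow := min'_northwestRows_add_val_lt hne
  rw [Fin.lt_def, hc] at hleft
  refine ⟨(σ.northwestRows c).min' hne, Or.inr ?_⟩
  dsimp only
  omega

/-- for `1 ≤ m ≤ n` and `0 ≤ t ≤ m-1`, the flag-shaped set
`B_n(m,t)` is a blocker of all `n × n` `123`-avoiding permutation matrices. -/
theorem flagBlocker_isBlocker (n m t : ℕ) (hm1 : 1 ≤ m) (hmn : m ≤ n)
    (ht : t + 1 ≤ m) :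
    IsBlocker (FlagBlocker n m t) :=
  flagBlocker_isBlocker_general n m t hmn ht
end

section
/- Let n, m, t be integers with 1 ≤ m ≤ n and 0 ≤ t ≤ m−1, and let B_n(m,t) be the flag-shaped blocker. For every column index j with m−t ≤ j ≤ m (i.e., for every position (1, j) of B_n(m,t) lying in the first row), there exists a 123-avoiding permutation σ of {1,…,n} with σ(1) = j and (i, σ(i)) ∉ B_n(m,t) for all i ≥ 2; in particular σ intersects B_n(m,t) exactly once, at the position (1, j). -/
/-!
In `1`-based coordinates the witness sends row `1` to column `j` and is otherwise a merge of two
decreasing sequences. The flag rows `2, …, n-m+1` take the columns `n, …, m+1` to the right of the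
blocker, the remaining pole rows take the columns `j-1, j-2, …` to the left of `j`, and the rows
below the pole take the leftover columns `m, …, j+1` and then the leftover columns below `j`, each
in decreasing order. So every row lies in the decreasing chain of values above `j` or in that of
values at most `j`, and a `123` pattern would have two entries in the same chain.
-/

section TwoDecreasingChains

variable {α β : Type*} [LinearOrder α] [LinearOrder β] {f : α → β} {c : β}

def StrictAntiOnThresholdClasses (f : α → β) (c : β) : Prop :=
  ∀ a b, a < b → (c < f a ↔ c < f b) → f b < f a

theorem StrictAntiOnThresholdClasses.injective (hf : StrictAntiOnThresholdClasses f c) :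
    Function.Injective f := by
  intro a b hab
  by_contra hne
  rcases lt_or_gt_of_ne hne with h | h
  · exact (hf a b h (by rw [hab])).ne hab.symm
  · exact (hf b a h (by rw [hab])).ne hab

theorem StrictAntiOnThresholdClasses.not_lt_of_lt (hf : StrictAntiOnThresholdClasses f c)
    {a b d : α} (hab : a < b) (hbd : b < d) (h₁ : f a < f b) : ¬ f b < f d := by
  intro h₂
  have hab' : ¬ (c < f a ↔ c < f b) := fun h => (hf a b hab h).not_gt h₁
  have hbd' : ¬ (c < f b ↔ c < f d) := fun h => (hf b d hbd h).not_gt h₂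
  exact (hf a d (hab.trans hbd) (by tauto)).not_gt (h₁.trans h₂)

theorem avoids123_of_strictAntiOnThresholdClasses {n : ℕ} {σ : Equiv.Perm (Fin n)} {c : Fin n}
    (hσ : StrictAntiOnThresholdClasses σ c) : Avoids123 σ :=
  fun _ _ _ hab hbd h₁ => hσ.not_lt_of_lt hab hbd h₁

end TwoDecreasingChains

section Witness

variable {n m t j : ℕ}

/-- Row `i` goes to column `flagWitness n m t j i`; rows and columns are `0`-based here. -/
def flagWitness (n m t j i : ℕ) : ℕ :=
  if i = 0 then j
  else if i + m ≤ n then n - i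
  else if i + t + 1 ≤ n then j + (n - m) - i
  else if i + j + t + 2 ≤ n + m then n + m - t - 1 - i
  else n - 1 - i

theorem flagWitness_zero : flagWitness n m t j 0 = j := if_pos rfl

theorem flagWitness_lt (hmn : m ≤ n) (hj₂ : j + 1 ≤ m) {i : ℕ} (hi : i < n) :
    flagWitness n m t j i < n := by
  unfold flagWitness; split_ifs <;> omega

theorem flagWitness_strictAnti_on_classes (ht : t + 1 ≤ m) (hj₁ : m ≤ j + 1 + t) (hj₂ : j + 1 ≤ m)
    {a b : ℕ} (hab : a < b) (hb : b < n)
    (hclass : j < flagWitness n m t j a ↔ j < flagWitness n m t j b) :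
    flagWitness n m t j b < flagWitness n m t j a := by
  unfold flagWitness at *; split_ifs at * <;> omega

theorem flagWitness_not_mem_flagBlocker (hj₂ : j + 1 ≤ m) {i : ℕ} (hi₀ : i ≠ 0) :
    ¬ ((flagWitness n m t j i + 1 = m ∧ i + 1 + t ≤ n) ∨
       (i + m ≤ n ∧ m ≤ flagWitness n m t j i + 1 + t ∧ flagWitness n m t j i + 2 ≤ m)) := by
  unfold flagWitness; split_ifs <;> omega

end Witness

theorem flagBlocker_first_row_once_general (n m t : ℕ) (hn : 0 < n)
    (hmn : m ≤ n) (ht : t + 1 ≤ m) (j : Fin n)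
    (hj1 : m ≤ (j : ℕ) + 1 + t) (hj2 : (j : ℕ) + 1 ≤ m) :
    ∃ σ : Equiv.Perm (Fin n), Avoids123 σ ∧ σ ⟨0, hn⟩ = j ∧
      ∀ i : Fin n, i ≠ ⟨0, hn⟩ → (i, σ i) ∉ FlagBlocker n m t := by
  let f : Fin n → Fin n := fun i => ⟨flagWitness n m t j i, flagWitness_lt hmn hj2 i.isLt⟩
  have hf : StrictAntiOnThresholdClasses f j := fun a b hab hclass =>
    flagWitness_strictAnti_on_classes ht hj1 hj2 hab b.isLt hclass
  let σ := Equiv.ofBijective f (Finite.injective_iff_bijective.mp hf.injective)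
  exact ⟨σ, avoids123_of_strictAntiOnThresholdClasses hf,
    Fin.ext (flagWitness_zero (n := n) (m := m) (t := t)),
    fun i hi => flagWitness_not_mem_flagBlocker hj2 (fun h => hi (Fin.ext h))⟩

/-- for every position `(1, j)` of `B_n(m,t)` in the first row
(i.e. `m - t ≤ j ≤ m` in `1`-based coordinates), there is a `123`-avoiding
permutation `σ` with `σ(1) = j` which avoids the blocker in all rows `i ≥ 2`;
in particular it meets the blocker exactly once, at `(1, j)`. -/
theorem flagBlocker_first_row_once (n m t : ℕ) (hn : 0 < n) (hm1 : 1 ≤ m)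
    (hmn : m ≤ n) (ht : t + 1 ≤ m) (j : Fin n)
    (hj1 : m ≤ (j : ℕ) + 1 + t) (hj2 : (j : ℕ) + 1 ≤ m) :
    ∃ σ : Equiv.Perm (Fin n), Avoids123 σ ∧ σ ⟨0, hn⟩ = j ∧
      ∀ i : Fin n, i ≠ ⟨0, hn⟩ → (i, σ i) ∉ FlagBlocker n m t :=
  flagBlocker_first_row_once_general n m t hn hmn ht j hj1 hj2
end

section
/- Let n, m, t be integers with 1 ≤ m ≤ n and 0 ≤ t ≤ m−1. Then B_n(m,t) is a minimum blocker of all n×n 123-avoiding permutation matrices: B_n(m,t) is a blocker, and for every position b ∈ B_n(m,t), the set B_n(m,t) \ {b} is not a blocker (equivalently, for every b = (i₀, j₀) ∈ B_n(m,t) there exists a 123-avoiding permutation σ with σ(i₀) = j₀ and (i, σ(i)) ∉ B_n(m,t) for all i ≠ i₀). -/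
open Finset

theorem Function.Injective.exists_mem_apply_notMem_of_card_lt {α β : Type*} {f : α → β}
    (hf : Function.Injective f) {s : Finset α} {u : Finset β} (h : #u < #s) :
    ∃ a ∈ s, f a ∉ u := by
  by_contra! hmaps
  exact h.not_ge (card_le_card_of_injOn f hmaps hf.injOn)

theorem isBlocker_flagBlocker {n m t : ℕ} (hmn : m ≤ n) (ht : t + 1 ≤ m) :
    IsBlocker (FlagBlocker n m t) := by
  intro σ hσ
  by_contra! hmiss
  simp only [FlagBlocker, Set.mem_ofPred_eq, not_or, not_and, not_le] at hmiss
  set r := σ.symm ⟨m - 1, by omega⟩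
  have hσr : (σ r : ℕ) = m - 1 := by simp [r]
  have hr : n < r + 1 + t := (hmiss r).1 (by omega)
  obtain ⟨i₀, hi₀, hσi₀⟩ := σ.injective.exists_mem_apply_notMem_of_card_lt
    (s := Iic ⟨n - m, by omega⟩) (u := Ioi ⟨m - 1, by omega⟩)
    (by simp only [Fin.card_Iic, Fin.card_Ioi]; omega)
  obtain ⟨v, hv, hσv⟩ := σ.symm.injective.exists_mem_apply_notMem_of_card_lt
    (s := Icc ⟨m - t - 1, by omega⟩ ⟨m - 2, by omega⟩) (u := Ioi r)
    (by simp only [Fin.card_Icc, Fin.card_Ioi]; omega)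
  set j := σ.symm v
  have hσj : (σ j : ℕ) = v := by simp [j]
  simp only [mem_Iic, mem_Ioi, mem_Icc, Fin.le_def, Fin.lt_def, not_lt] at hi₀ hσi₀ hv hσv
  have hjr : j ≠ r := by intro h; rw [h] at hσj; omega
  have hi₀B := hmiss i₀
  have hjB := hmiss j
  refine hσ i₀ j r ?_ (lt_of_le_of_ne hσv hjr) ?_ ?_ <;> simp only [Fin.lt_def] <;> omega

theorem avoids123_of_strictAntiOn {n : ℕ} {σ : Equiv.Perm (Fin n)} (k : ℕ)
    (hlow : StrictAntiOn σ {i | (σ i : ℕ) < k})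
    (hhigh : StrictAntiOn σ {i | k ≤ (σ i : ℕ)}) :
    Avoids123 σ := by
  intro i j l hij hjl hσij hσjl
  by_cases hj : (σ j : ℕ) < k
  · have hi : (σ i : ℕ) < k := lt_trans hσij hj
    exact (hlow hi hj hij).not_gt hσij
  · have hl : k ≤ (σ l : ℕ) := (not_lt.1 hj).trans hσjl.le
    exact (hhigh (not_lt.1 hj) hl hjl).not_gt hσjl

noncomputable def permOfNat (n : ℕ) (f : ℕ → ℕ) (hmaps : ∀ i < n, f i < n)
    (hinj : ∀ i < n, ∀ j < n, f i = f j → i = j) : Equiv.Perm (Fin n) :=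
  Equiv.ofBijective (fun i => ⟨f i, hmaps i i.2⟩)
    (Finite.injective_iff_bijective.1 fun i j h => Fin.ext (hinj i i.2 j j.2 (Fin.val_eq_of_eq h)))

theorem not_isBlocker_diff_singleton_of_nat {n : ℕ} {B : Set (Fin n × Fin n)}
    {b : Fin n × Fin n} (f : ℕ → ℕ) (k : ℕ) (hmaps : ∀ i < n, f i < n)
    (hanti : ∀ i j, i < j → j < n → (f i < k ↔ f j < k) → f j < f i)
    (hB : ∀ i (hi : i < n), (⟨i, hi⟩, ⟨f i, hmaps i hi⟩) ∈ B → i = b.1 ∧ f i = b.2) :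
    ¬ IsBlocker (B \ {b}) := by
  have hinj : ∀ i < n, ∀ j < n, f i = f j → i = j := by
    intro i hi j hj hij
    rcases lt_trichotomy i j with h | h | h
    · have := hanti i j h hj; omega
    · exact h
    · have := hanti j i h hi; omega
  set σ := permOfNat n f hmaps hinj
  have hσ : Avoids123 σ := avoids123_of_strictAntiOn k
    (fun i hi j hj hij => hanti i j hij j.2 (iff_of_true hi hj))
    (fun i hi j hj hij => hanti i j hij j.2 (iff_of_false (not_lt.2 hi) (not_lt.2 hj)))
  intro hblock
  obtain ⟨i, hiB, hib⟩ := hblock σ hσ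
  obtain ⟨h₁, h₂⟩ := hB i i.2 hiB
  exact hib (Prod.ext (Fin.ext h₁) (Fin.ext h₂))

/-- In 0-based coordinates: the values `≤ c` fill, decreasingly, row `r` and the rows
`i > n - m` outside `[n - t, n - t + m - c - 2]`; the larger values fill the other rows
decreasingly. The other flag columns are then hit below the flag rows, and the pole column
(if `c < m - 1`) in row `n - t`, just below the pole. -/
def upperWitness (n m t r c : ℕ) (i : ℕ) : ℕ :=
  if i < r then n - 1 - i
  else if i = r then c
  else if i ≤ n - m then n - i
  else if i ≤ n - t - 1 then c + n - m - i
  else if i ≤ n - t + m - c - 2 then m - 1 + n - t - i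
  else n - 1 - i

/-- In 0-based coordinates: the values `≥ m - t - 1` fill, decreasingly, the rows `i < n - m`
and `r ≤ i ≤ r + t`; the smaller values fill the other rows decreasingly. So the pole column
is hit in row `r` and the flag columns in rows `r + 1, …, r + t`, below the flag rows. -/
def lowerWitness (n m t r : ℕ) (i : ℕ) : ℕ :=
  if i < n - m then n - 1 - i
  else if i < r then n - t - 2 - i
  else if i ≤ r + t then m - 1 + r - i
  else n - 1 - i

theorem not_isBlocker_flagBlocker_diff_of_add_le {n m t : ℕ} {r c : Fin n}
    (ht : t + 1 ≤ m) (hr : r + m ≤ n) (hc : m ≤ c + t + 1) (hc' : c + 1 ≤ m) :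
    ¬ IsBlocker (FlagBlocker n m t \ {(r, c)}) := by
  refine not_isBlocker_diff_singleton_of_nat (upperWitness n m t r c) (c + 1) ?_ ?_ ?_
  · intro i hi; unfold upperWitness; split_ifs <;> omega
  · intro i j hij hj; unfold upperWitness; split_ifs <;> omega
  · intro i hi hiB
    simp only [FlagBlocker, Set.mem_ofPred_eq] at hiB ⊢
    unfold upperWitness at hiB ⊢; split_ifs at hiB ⊢ <;> omega

theorem not_isBlocker_flagBlocker_diff_of_lt_add {n m t : ℕ} {r c : Fin n}
    (hc : c + 1 = m) (hr : n < r + m) (hr' : r + 1 + t ≤ n) :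
    ¬ IsBlocker (FlagBlocker n m t \ {(r, c)}) := by
  refine not_isBlocker_diff_singleton_of_nat (lowerWitness n m t r) (m - t - 1) ?_ ?_ ?_
  · intro i hi; unfold lowerWitness; split_ifs <;> omega
  · intro i j hij hj; unfold lowerWitness; split_ifs <;> omega
  · intro i hi hiB
    simp only [FlagBlocker, Set.mem_ofPred_eq] at hiB ⊢
    unfold lowerWitness at hiB ⊢; split_ifs at hiB ⊢ <;> omega

theorem flagBlocker_is_minimum_blocker_general (n m t : ℕ) (hmn : m ≤ n)
    (ht : t + 1 ≤ m) :
    IsBlocker (FlagBlocker n m t) ∧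
      ∀ b ∈ FlagBlocker n m t, ¬ IsBlocker (FlagBlocker n m t \ {b}) := by
  refine ⟨isBlocker_flagBlocker hmn ht, ?_⟩
  rintro ⟨r, c⟩ hb
  simp only [FlagBlocker, Set.mem_ofPred_eq] at hb
  rcases hb with ⟨hc, hr⟩ | ⟨hr, hc, hc'⟩
  · by_cases hflag : r + m ≤ n
    · exact not_isBlocker_flagBlocker_diff_of_add_le ht hflag (by omega) (by omega)
    · exact not_isBlocker_flagBlocker_diff_of_lt_add hc (by omega) hr
  · exact not_isBlocker_flagBlocker_diff_of_add_le ht hr (by omega) (by omega)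

/-- `B_n(m,t)` is a minimum blocker: it is a blocker, and
removing any one of its positions destroys the blocker property. -/
theorem flagBlocker_is_minimum_blocker (n m t : ℕ) (hm1 : 1 ≤ m) (hmn : m ≤ n)
    (ht : t + 1 ≤ m) :
    IsBlocker (FlagBlocker n m t) ∧
      ∀ b ∈ FlagBlocker n m t, ¬ IsBlocker (FlagBlocker n m t \ {b}) :=
  flagBlocker_is_minimum_blocker_general n m t hmn ht
end

section
/- Let n, a, b be integers with a ≥ 2, b ≥ 2 and a + b ≤ n − 1 (so that a·b is a composite number). Then there exist integers m, t with 1 ≤ m ≤ n and 0 ≤ t ≤ m − 1 such that t(n − m) = ab (for instance m = n − b and t = a); consequently there exists an n×n flag-shaped blocker B_n(m,t) of cardinality exactly n + ab. -/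
section

open Set

lemma Fin.ncard_val_preimage_Ico {n a b : ℕ} (hb : b ≤ n) :
    (Fin.val ⁻¹' Ico a b : Set (Fin n)).ncard = b - a := by
  rw [ncard_preimage_of_injective_subset_range Fin.val_injective
    (Fin.range_val ▸ Ico_subset_Iio_self.trans (Iio_subset_Iio hb)), ncard_Ico_nat]

lemma flagBlocker_eq_union_prod {n m : ℕ} (t : ℕ) (hm : 1 ≤ m) :
    FlagBlocker n m t =
      (Fin.val ⁻¹' Ico 0 (n - t)) ×ˢ (Fin.val ⁻¹' Ico (m - 1) m) ∪
        (Fin.val ⁻¹' Ico 0 (n + 1 - m)) ×ˢ (Fin.val ⁻¹' Ico (m - 1 - t) (m - 1)) := by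
  ext ⟨i, j⟩
  simp only [FlagBlocker, mem_ofPred_eq, mem_union, mem_prod, mem_preimage, mem_Ico]
  omega

lemma ncard_flagBlocker {n m t : ℕ} (hmn : m ≤ n) (htm : t + 1 ≤ m) :
    (FlagBlocker n m t).ncard = n + t * (n - m) := by
  have hdisj : Disjoint ((Fin.val ⁻¹' Ico 0 (n - t)) ×ˢ (Fin.val ⁻¹' Ico (m - 1) m))
      ((Fin.val ⁻¹' Ico 0 (n + 1 - m)) ×ˢ (Fin.val ⁻¹' Ico (m - 1 - t) (m - 1)) :
        Set (Fin n × Fin n)) :=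
    disjoint_left.2 fun p hpole hflag => by
      simp only [mem_prod, mem_preimage, mem_Ico] at hpole hflag
      omega
  rw [flagBlocker_eq_union_prod t (by omega), ncard_union_eq hdisj, ncard_prod, ncard_prod,
    Fin.ncard_val_preimage_Ico (by omega), Fin.ncard_val_preimage_Ico (by omega),
    Fin.ncard_val_preimage_Ico (by omega), Fin.ncard_val_preimage_Ico (by omega),
    show n + 1 - m = n - m + 1 by omega, show m - 1 - (m - 1 - t) = t by omega,
    show m - (m - 1) = 1 by omega, Nat.sub_zero, Nat.sub_zero, mul_one, add_mul, one_mul, mul_comm]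
  omega

end

theorem flagBlocker_card_composite_excess_general (n a b : ℕ)
    (hab : a + b + 1 ≤ n) :
    ∃ m t : ℕ, 1 ≤ m ∧ m ≤ n ∧ t + 1 ≤ m ∧ t * (n - m) = a * b ∧
      (FlagBlocker n m t).ncard = n + a * b := by
  refine ⟨n - b, a, by omega, by omega, by omega, ?_, ?_⟩
  · rw [Nat.sub_sub_self (by omega)]
  · rw [ncard_flagBlocker (by omega) (by omega), Nat.sub_sub_self (by omega)]

/-- for `a, b ≥ 2` with `a + b ≤ n - 1`, there are `m, t` with
`1 ≤ m ≤ n`, `0 ≤ t ≤ m - 1` and `t * (n - m) = a * b`; consequently there is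
a flag-shaped blocker `B_n(m,t)` of cardinality exactly `n + a * b`. -/
theorem flagBlocker_card_composite_excess (n a b : ℕ) (ha : 2 ≤ a) (hb : 2 ≤ b)
    (hab : a + b + 1 ≤ n) :
    ∃ m t : ℕ, 1 ≤ m ∧ m ≤ n ∧ t + 1 ≤ m ∧ t * (n - m) = a * b ∧
      (FlagBlocker n m t).ncard = n + a * b :=
  flagBlocker_card_composite_excess_general n a b hab
end

section
/- Let n, t be integers with 0 ≤ t ≤ n − 2 and set m = n − 1, and let B_n(n−1, t) be the flag-shaped blocker. If σ is a 123-avoiding permutation of {1,…,n} that intersects B_n(n−1, t) exactly once, then σ(i) ≠ n for every row i with n − t + 1 ≤ i ≤ n; that is, none of the t positions (i, n) with n − t + 1 ≤ i ≤ n lies on the permutation matrix of σ. -/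
/-!
Say `σ(i) = n` with `i ≥ n - t + 1 ≥ 3` (`1`-based). By `123`-avoidance `σ` decreases strictly
on the rows `1, …, i - 1`, so `n - 1 ≥ σ(1) > σ(2) ≥ i - 2 ≥ n - t - 1`. Then `(2, σ(2))` lies
in the flag and `(1, σ(1))` in the flag or on the pole: two rows meet `B_n(n - 1, t)`.
-/

theorem Fin.le_apply_add_of_strictAntiOn {n : ℕ} {f : Fin n → ℕ} {i : Fin n}
    (hf : StrictAntiOn f (Set.Iio i)) (k : Fin n) (hk : k < i) :
    (i : ℕ) ≤ f k + k + 1 := by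
  induction k using WellFoundedGT.induction with
  | _ k ih =>
    rcases Nat.lt_or_ge ((k : ℕ) + 1) i with hlt | hge
    · let k' : Fin n := ⟨k + 1, by omega⟩
      have hkk' : k < k' := Fin.lt_def.mpr (Nat.lt_succ_self _)
      have hk'i : k' < i := Fin.lt_def.mpr hlt
      have hstep : f k' < f k := hf hk hk'i hkk'
      have hk' : (i : ℕ) ≤ f k' + (k + 1) + 1 := ih k' hkk' hk'i
      omega
    · omega

theorem Avoids123.strictAntiOn_Iio {n : ℕ} {σ : Equiv.Perm (Fin n)} (hσ : Avoids123 σ)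
    {i : Fin n} (hi : ∀ k < i, σ k < σ i) : StrictAntiOn σ (Set.Iio i) := by
  intro j hj k hk hjk
  by_contra! hle
  exact hσ j k i hjk hk (hle.lt_of_ne (σ.injective.ne hjk.ne)) (hi k hk)

/-- for the flag-shaped blocker `B_n(n-1, t)` (`0 ≤ t ≤ n - 2`),
no `123`-avoiding permutation meeting the blocker exactly once uses any of the
`t` positions `(i, n)` with `n - t + 1 ≤ i ≤ n` (`1`-based coordinates). -/
theorem flagBlocker_lastCol_unused (n t : ℕ) (ht : t + 2 ≤ n)
    (σ : Equiv.Perm (Fin n)) (hσ : Avoids123 σ)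
    (honce : ∃! i : Fin n, (i, σ i) ∈ FlagBlocker n (n - 1) t) :
    ∀ i : Fin n, n ≤ (i : ℕ) + t → (σ i : ℕ) + 1 ≠ n := by
  intro i hi hcol
  have hmax : ∀ k < i, σ k < σ i := fun k hk =>
    (Fin.le_def.mpr (by omega : (σ k : ℕ) ≤ σ i)).lt_of_ne (σ.injective.ne hk.ne)
  have hanti : StrictAntiOn (fun k => (σ k : ℕ)) (Set.Iio i) :=
    Fin.val_strictMono.comp_strictAntiOn (hσ.strictAntiOn_Iio hmax)
  let r₀ : Fin n := ⟨0, by omega⟩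
  let r₁ : Fin n := ⟨1, by omega⟩
  have hr₀ : r₀ < i := Fin.lt_def.mpr (by change 0 < (i : ℕ); omega)
  have hr₁ : r₁ < i := Fin.lt_def.mpr (by change 1 < (i : ℕ); omega)
  have hr₀r₁ : r₀ < r₁ := Fin.lt_def.mpr Nat.zero_lt_one
  have hσr₁ : (i : ℕ) ≤ σ r₁ + r₁ + 1 := Fin.le_apply_add_of_strictAntiOn hanti r₁ hr₁
  have hσr₁r₀ : (σ r₁ : ℕ) < σ r₀ := hanti hr₀ hr₁ hr₀r₁
  have hσr₀ : (σ r₀ : ℕ) < σ i := hmax r₀ hr₀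
  have hv₀ : (r₀ : ℕ) = 0 := rfl
  have hv₁ : (r₁ : ℕ) = 1 := rfl
  have hmem₀ : (r₀, σ r₀) ∈ FlagBlocker n (n - 1) t := by
    simp only [FlagBlocker, Set.mem_ofPred_eq]; omega
  have hmem₁ : (r₁, σ r₁) ∈ FlagBlocker n (n - 1) t := by
    simp only [FlagBlocker, Set.mem_ofPred_eq]; omega
  exact hr₀r₁.ne (honce.unique hmem₀ hmem₁)
end

section
/- Let n, m, t be integers with 1 ≤ m ≤ n and 0 ≤ t ≤ m−1, and let B_n(m,t) be the flag-shaped blocker. If σ is a 123-avoiding permutation of {1,…,n} that intersects B_n(m,t) exactly once, then σ(i) ≤ m for every row i with n − t + 1 ≤ i ≤ n; that is, none of the t(n−m) positions (i, j) with n − t + 1 ≤ i ≤ n and m + 1 ≤ j ≤ n lies on the permutation matrix of σ. -/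
open Finset

theorem Fin.card_filter_val_mem_Ico {n c d : ℕ} (h : d ≤ n) :
    #{i : Fin n | c ≤ (i : ℕ) ∧ (i : ℕ) < d} = d - c := by
  rw [← card_map Fin.valEmbedding, ← Nat.card_Ico]
  congr 1
  ext x
  simp only [mem_map, mem_filter, mem_univ, true_and, Fin.valEmbedding_apply, mem_Ico]
  exact ⟨fun ⟨i, hi, hix⟩ => hix ▸ hi, fun hx => ⟨⟨x, by omega⟩, hx, rfl⟩⟩

theorem Equiv.card_filter_apply {α β : Type*} [Fintype α] [Fintype β] (e : α ≃ β)
    (p : β → Prop) [DecidablePred p] : #{a | p (e a)} = #{b | p b} :=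
  card_equiv e (by simp)

/-- Every value below `σ k` sits after row `k` (otherwise `σ i` completes a `123`), so the
values below `m` other than `σ x`, together with `σ i`, occupy `m` distinct rows `≥ k`. -/
theorem Avoids123.row_add_le {n m : ℕ} {σ : Equiv.Perm (Fin n)} (hσ : Avoids123 σ)
    {k i x : Fin n} (hki : k < i) (hk : σ k < σ i) (hi : m ≤ (σ i : ℕ))
    (hx : ∀ a < k, σ k < σ a → (σ a : ℕ) < m → a = x) : (k : ℕ) + m ≤ n := by
  have hsub : insert i ({a | (σ a : ℕ) < m} : Finset (Fin n)) ⊆ insert x (Ici k) := by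
    intro a ha
    simp only [mem_insert, mem_filter, mem_univ, true_and, mem_Ici] at ha ⊢
    rcases ha with rfl | ha
    · exact Or.inr hki.le
    rcases le_or_gt k a with hka | hak
    · exact Or.inr hka
    refine Or.inl (hx a hak ?_ ha)
    refine (lt_or_gt_of_ne fun h => hak.ne (σ.injective h)).resolve_left fun hak' => ?_
    exact hσ a k i hak hki hak' hk
  have hcard := (card_le_card hsub).trans (card_insert_le x (Ici k))
  rw [card_insert_of_notMem (by simpa using hi), σ.card_filter_apply (fun v => (v : ℕ) < m),
    Fin.card_filter_val_lt, Fin.card_Ici] at hcard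
  have := (σ i).isLt
  omega

theorem mem_flagBlocker_of_add_le {n m t : ℕ} (ht : t + 1 ≤ m) {i j : Fin n}
    (hi : (i : ℕ) + m ≤ n) (hj : m - (t + 1) ≤ (j : ℕ)) (hjm : (j : ℕ) < m) :
    (i, j) ∈ FlagBlocker n m t := by
  simp only [FlagBlocker, Set.mem_ofPred_eq]
  by_cases h : (j : ℕ) + 1 = m
  · exact Or.inl ⟨h, by omega⟩
  · exact Or.inr ⟨hi, by omega, by omega⟩

theorem exists_flagColumn_row_between {n m t : ℕ} (ht : t + 1 ≤ m) {σ : Equiv.Perm (Fin n)}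
    {i q : Fin n} (hi : n ≤ (i : ℕ) + t) (hσi : m ≤ (σ i : ℕ))
    (hq : ∀ a, (a, σ a) ∈ FlagBlocker n m t → a = q) :
    ∃ k : Fin n, m - (t + 1) ≤ (σ k : ℕ) ∧ (σ k : ℕ) < m ∧ n < (k : ℕ) + m ∧ (k : ℕ) + t < n := by
  by_contra! h
  set W : Finset (Fin n) := {a | m - (t + 1) ≤ (σ a : ℕ) ∧ (σ a : ℕ) < m}
  have hsub : insert i W ⊆ insert q ({a | n ≤ (a : ℕ) + t} : Finset (Fin n)) := by
    intro a ha
    simp only [W, mem_insert, mem_filter, mem_univ, true_and] at ha ⊢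
    rcases ha with rfl | ⟨ha₁, ha₂⟩
    · exact Or.inr hi
    rcases le_or_gt ((a : ℕ) + m) n with ham | ham
    · exact Or.inl (hq a (mem_flagBlocker_of_add_le ht ham ha₁ ha₂))
    · exact Or.inr (h a ha₁ ha₂ ham)
  have hmn : m < n := by have := (σ i).isLt; omega
  have hcard := (card_le_card hsub).trans (card_insert_le _ _)
  rw [card_insert_of_notMem (by simp [W]; omega),
    σ.card_filter_apply (fun v => m - (t + 1) ≤ (v : ℕ) ∧ (v : ℕ) < m),
    Fin.card_filter_val_mem_Ico hmn.le] at hcard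
  have hlast : #({a | n ≤ (a : ℕ) + t} : Finset (Fin n)) = n - (n - t) := by
    rw [← Fin.card_filter_val_mem_Ico le_rfl]
    congr 1
    ext a
    have := a.isLt
    simp only [mem_filter, mem_univ, true_and]
    omega
  omega

theorem flagBlocker_corner_unused_general (n m t : ℕ)
    (ht : t + 1 ≤ m) (σ : Equiv.Perm (Fin n)) (hσ : Avoids123 σ)
    (honce : ∃! i : Fin n, (i, σ i) ∈ FlagBlocker n m t) :
    ∀ i : Fin n, n ≤ (i : ℕ) + t → (σ i : ℕ) + 1 ≤ m := by
  intro i hi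
  by_contra! hσi
  obtain ⟨q, -, hq⟩ := honce
  obtain ⟨k₀, hk₀₁, hk₀₂, hk₀m, hk₀t⟩ := exists_flagColumn_row_between ht hi (by omega) hq
  obtain ⟨k, ⟨hk₁, hk₂, hkm⟩, hmin⟩ := wellFounded_lt.has_min
    {k : Fin n | m - (t + 1) ≤ (σ k : ℕ) ∧ (σ k : ℕ) < m ∧ n < (k : ℕ) + m}
    ⟨k₀, hk₀₁, hk₀₂, hk₀m⟩
  have hkk₀ : k ≤ k₀ := not_lt.mp (hmin k₀ ⟨hk₀₁, hk₀₂, hk₀m⟩)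
  suffices (k : ℕ) + m ≤ n by omega
  refine hσ.row_add_le (i := i) (x := q) (by omega) (by omega) (by omega)
    fun a hak hka ham => ?_
  rcases le_or_gt ((a : ℕ) + m) n with ham' | ham'
  · exact hq a (mem_flagBlocker_of_add_le ht ham' (by omega) ham)
  · exact absurd hak (hmin a ⟨by omega, ham, ham'⟩)

/-- no `123`-avoiding permutation meeting the flag-shaped blocker
`B_n(m,t)` exactly once uses any of the `t(n-m)` positions `(i, j)` with
`n - t + 1 ≤ i ≤ n` and `m + 1 ≤ j ≤ n` (`1`-based coordinates); that is, in
those rows it satisfies `σ(i) ≤ m`. -/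
theorem flagBlocker_corner_unused (n m t : ℕ) (hm1 : 1 ≤ m) (hmn : m ≤ n)
    (ht : t + 1 ≤ m) (σ : Equiv.Perm (Fin n)) (hσ : Avoids123 σ)
    (honce : ∃! i : Fin n, (i, σ i) ∈ FlagBlocker n m t) :
    ∀ i : Fin n, n ≤ (i : ℕ) + t → (σ i : ℕ) + 1 ≤ m :=
  flagBlocker_corner_unused_general n m t ht σ hσ honce
end

section
/- Let n, m, t be integers with 1 ≤ m ≤ n and 0 ≤ t ≤ m−1, and let B_n(m,t) be the flag-shaped blocker. If S is a family of permutation matrices of 123-avoiding permutations of {1,…,n}, each of which intersects B_n(m,t) exactly once, and the matrices in S are linearly independent over ℝ, then |S| ≤ (n−1)² + 1 − t(n−m). -/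
open Finset

theorem Fin.card_filter_le_val_lt {n : ℕ} (a b : ℕ) :
    #{i : Fin n | a ≤ (i : ℕ) ∧ (i : ℕ) < b} = min n b - a := by
  rw [← card_map Fin.valEmbedding, ← Nat.card_Ico a (min n b)]
  congr 1
  ext x
  simp only [mem_map, mem_filter, mem_univ, true_and, Fin.valEmbedding_apply, mem_Ico]
  constructor
  · rintro ⟨i, hi, rfl⟩; omega
  · intro hx; exact ⟨⟨x, by omega⟩, by simp; omega⟩

theorem Fin.card_filter_le_val {n : ℕ} (a : ℕ) : #{i : Fin n | a ≤ (i : ℕ)} = n - a := by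
  simpa using Fin.card_filter_le_val_lt (n := n) a n

theorem Finset.exists_lt_forall_lt_imp_eq {α : Type*} [LinearOrder α] {s : Finset α}
    (hs : 2 ≤ #s) : ∃ a ∈ s, ∃ b ∈ s, b < a ∧ ∀ u ∈ s, b < u → u = a := by
  have hne : s.Nonempty := card_pos.1 (by omega)
  have hne' : (s.erase (s.max' hne)).Nonempty := by
    rw [← card_pos, card_erase_of_mem (s.max'_mem hne)]; omega
  refine ⟨s.max' hne, s.max'_mem hne, _, mem_of_mem_erase ((s.erase _).max'_mem hne'),
    (s.erase _).max'_lt_iff hne' |>.2 fun u hu => ?_, fun u hu hlt => ?_⟩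
  · exact lt_of_le_of_ne (s.le_max' u (mem_of_mem_erase hu)) (ne_of_mem_erase hu)
  · by_contra hua
    exact absurd ((s.erase _).le_max' u (mem_erase.2 ⟨hua, hu⟩)) (not_le.2 hlt)

theorem Matrix.eq_zero_of_sum_row_eq_zero_of_sum_col_eq_zero {ι R : Type*} [Fintype ι]
    [AddCommMonoid R] {M : Matrix ι ι R} (z : ι)
    (hrow : ∀ i, ∑ j, M i j = 0) (hcol : ∀ j, ∑ i, M i j = 0)
    (hM : ∀ i j, i ≠ z → j ≠ z → M i j = 0) : M = 0 := by
  have hoff : ∀ i j, i ≠ z → M i j = 0 := by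
    intro i j hi
    by_cases hj : j = z
    · rw [hj, ← hrow i, sum_eq_single z (fun j _ hj => hM i j hi hj) (by simp)]
    · exact hM i j hi hj
  ext i j
  rw [Matrix.zero_apply]
  by_cases hi : i = z
  · rw [hi, ← hcol j, sum_eq_single z (fun i _ hi => hoff i j hi) (by simp)]
  · exact hoff i j hi

theorem card_subtype_ne_ne_notMem_add_card {ι : Type*} [Fintype ι] [DecidableEq ι] (z : ι)
    {Z : Finset (ι × ι)} (hZ : ∀ p ∈ Z, p.1 ≠ z ∧ p.2 ≠ z) :
    Fintype.card {p : ι × ι // p.1 ≠ z ∧ p.2 ≠ z ∧ p ∉ Z} + #Z = (Fintype.card ι - 1) ^ 2 := by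
  have hZsub : Z ⊆ univ.erase z ×ˢ univ.erase z := fun p hp => by simpa using hZ p hp
  have hblock : #(univ.erase z ×ˢ univ.erase z) = (Fintype.card ι - 1) ^ 2 := by
    rw [card_product, card_erase_of_mem (mem_univ z), card_univ, sq]
  rw [← hblock, ← card_sdiff_add_card_eq_card hZsub, Fintype.card_subtype]
  congr 2
  ext p
  simp [and_assoc]

theorem card_add_card_le_of_linearIndependent {K ι κ : Type*} [Field K] [Fintype ι]
    [DecidableEq ι] [Fintype κ] (z : ι) (Z : Finset (ι × ι)) (hZ : ∀ p ∈ Z, p.1 ≠ z ∧ p.2 ≠ z)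
    {v : κ → Matrix ι ι K} (hv : LinearIndependent K v)
    (hrow : ∀ a i, ∑ j, v a i j = 1) (hcol : ∀ a j, ∑ i, v a i j = 1)
    (hvZ : ∀ a, ∀ p ∈ Z, v a p.1 p.2 = 0) :
    Fintype.card κ + #Z ≤ (Fintype.card ι - 1) ^ 2 + 1 := by
  let G := {p : ι × ι // p.1 ≠ z ∧ p.2 ≠ z ∧ p ∉ Z}
  let L : Matrix ι ι K →ₗ[K] K × (G → K) :=
    (∑ j, Matrix.entryLinearMap K K z j).prod
      (LinearMap.pi fun p : G => Matrix.entryLinearMap K K p.1.1 p.1.2)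
  have hLv : LinearIndependent K (L ∘ v) := by
    rw [Fintype.linearIndependent_iff] at hv ⊢
    intro g hg
    set M := ∑ a, g a • v a with hM
    have hMrow : ∀ i, ∑ j, M i j = ∑ a, g a := fun i => by
      simp only [hM, Matrix.sum_apply, Matrix.smul_apply, smul_eq_mul]
      rw [Finset.sum_comm]
      simp [← Finset.mul_sum, hrow]
    have hMcol : ∀ j, ∑ i, M i j = ∑ a, g a := fun j => by
      simp only [hM, Matrix.sum_apply, Matrix.smul_apply, smul_eq_mul]
      rw [Finset.sum_comm]
      simp [← Finset.mul_sum, hcol]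
    have hLM : L M = 0 := by simpa [hM, map_sum, map_smul] using hg
    have hsum : ∑ a, g a = 0 := by
      rw [← hMrow z]; simpa [L] using congrArg Prod.fst hLM
    have hMG : ∀ p : G, M p.1.1 p.1.2 = 0 := fun p => by
      simpa [L] using congrFun (congrArg Prod.snd hLM) p
    refine hv g (Matrix.eq_zero_of_sum_row_eq_zero_of_sum_col_eq_zero z
      (fun i => (hMrow i).trans hsum) (fun j => (hMcol j).trans hsum) fun i j hi hj => ?_)
    by_cases hij : (i, j) ∈ Z
    · simp [Matrix.sum_apply, hvZ _ _ hij]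
    · exact hMG ⟨(i, j), hi, hj, hij⟩
  have hN := hLv.fintype_card_le_finrank
  rw [Module.finrank_prod, Module.finrank_fintype_fun_eq_card, Module.finrank_self] at hN
  have hG : Fintype.card G + #Z = _ := card_subtype_ne_ne_notMem_add_card z hZ
  omega

theorem permMatrix_sum_row {n : ℕ} (σ : Equiv.Perm (Fin n)) (i : Fin n) :
    ∑ j, permMatrix n σ i j = 1 := by
  simp [permMatrix]

theorem permMatrix_sum_col {n : ℕ} (σ : Equiv.Perm (Fin n)) (j : Fin n) :
    ∑ i, permMatrix n σ i j = 1 := by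
  simp [permMatrix, ← Equiv.eq_symm_apply]

/-- The columns `m - t, …, m` (1-indexed) of the flag and its pole. -/
def flagBand (n m t : ℕ) : Finset (Fin n) := {v | m - (t + 1) ≤ (v : ℕ) ∧ (v : ℕ) < m}

def flagBandAbove (n m t : ℕ) (σ : Equiv.Perm (Fin n)) : Finset (Fin n) :=
  (flagBand n m t).filter fun v => (σ.symm v : ℕ) < n - t

section FlagBand

variable {n m t : ℕ} {σ : Equiv.Perm (Fin n)}

theorem two_le_card_flagBandAbove (hmn : m ≤ n) (ht : t + 1 ≤ m) {i : Fin n}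
    (hi : n - t ≤ (i : ℕ)) (hσi : m ≤ (σ i : ℕ)) : 2 ≤ #(flagBandAbove n m t σ) := by
  have hband : #(flagBand n m t) = t + 1 := by
    rw [flagBand, Fin.card_filter_le_val_lt]; omega
  have hbelow :
      #(insert (σ i) ((flagBand n m t).filter fun v => ¬ (σ.symm v : ℕ) < n - t)) ≤ t :=
    calc _ ≤ #{k : Fin n | n - t ≤ (k : ℕ)} := by
          refine card_le_card_of_injOn σ.symm (fun v hv => ?_) σ.symm.injective.injOn
          rcases mem_insert.1 hv with rfl | hv
          · simpa using hi
          · simpa using (mem_filter.1 hv).2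
      _ = t := by rw [Fin.card_filter_le_val]; omega
  rw [card_insert_of_notMem (by simp [flagBand]; omega)] at hbelow
  have := card_filter_add_card_filter_not (s := flagBand n m t)
    (p := fun v => (σ.symm v : ℕ) < n - t)
  rw [flagBandAbove]
  omega

theorem mem_flagBlocker_of_mem_flagBandAbove {v : Fin n} (hv : v ∈ flagBandAbove n m t σ)
    (hrow : (σ.symm v : ℕ) + m ≤ n) : (σ.symm v, σ (σ.symm v)) ∈ FlagBlocker n m t := by
  simp only [flagBandAbove, flagBand, mem_filter, mem_univ, true_and] at hv
  simp only [FlagBlocker, Equiv.apply_symm_apply, Set.mem_ofPred_eq]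
  omega

end FlagBand

namespace Avoids123

variable {n : ℕ} {σ : Equiv.Perm (Fin n)}

theorem symm_lt_symm (hσ : Avoids123 σ) {i u v : Fin n} (hv : v < σ i) (hvi : σ.symm v < i)
    (huv : u < v) : σ.symm v < σ.symm u := by
  by_contra! h
  have hne : σ.symm u ≠ σ.symm v := σ.symm.injective.ne huv.ne
  exact hσ _ _ i (lt_of_le_of_ne h hne) hvi (by simpa using huv) (by simpa using hv)

/-- The entries of column `σ i`, of the columns left of `v`, and of the band columns
right of `v` outside `flagBandAbove` all lie below row `σ⁻¹ v`. -/
theorem symm_add_le_of_mem_flagBandAbove (hσ : Avoids123 σ) {m t : ℕ} (hmn : m ≤ n)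
    {i : Fin n} (hi : n - t ≤ (i : ℕ)) (hσi : m ≤ (σ i : ℕ)) {v : Fin n}
    (hv : v ∈ flagBandAbove n m t σ) :
    (σ.symm v : ℕ) + m + 1 ≤ n + #((flagBandAbove n m t σ).filter (v < ·)) := by
  set T := flagBandAbove n m t σ
  set C : Finset (Fin n) := {u | (u : ℕ) < m}
  simp only [T, flagBandAbove, flagBand, mem_filter, mem_univ, true_and] at hv
  set Y := insert (σ i) (C.erase v \ T.filter (v < ·))
  have hY : ∀ u ∈ Y, σ.symm v < σ.symm u := by
    intro u hu
    rcases mem_insert.1 hu with rfl | hu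
    · rw [Equiv.symm_apply_apply, Fin.lt_def]; omega
    obtain ⟨hu, huT⟩ := mem_sdiff.1 hu
    simp only [C, mem_erase, mem_filter, mem_univ, true_and] at hu
    obtain ⟨huv, hum⟩ := hu
    rcases Ne.lt_or_gt huv with huv | huv
    · exact hσ.symm_lt_symm (i := i) (Fin.lt_def.2 (by omega)) (Fin.lt_def.2 (by omega)) huv
    · have hvu : (v : ℕ) < u := huv
      have : ¬ (σ.symm u : ℕ) < n - t := fun h =>
        huT (mem_filter.2 ⟨mem_filter.2 ⟨by simp [flagBand]; omega, h⟩, huv⟩)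
      rw [Fin.lt_def]; omega
  have hF : T.filter (v < ·) ⊆ C.erase v := fun u hu => by
    simp only [T, flagBandAbove, flagBand, mem_filter, mem_univ, true_and] at hu
    simp [C, hu.2.ne', hu.1.1.2]
  have hcardY : #Y = m - #(T.filter (v < ·)) := by
    have hC : #(C.erase v) = m - 1 := by
      rw [card_erase_of_mem (by simpa [C] using hv.1.2), Fin.card_filter_val_lt]; omega
    have := card_le_card hF
    rw [card_insert_of_notMem (by simp [C]; omega), card_sdiff_of_subset hF, hC] at *
    omega
  have hYle : #Y ≤ n - 1 - σ.symm v :=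
    calc #Y ≤ #(Ioi (σ.symm v)) :=
          card_le_card_of_injOn σ.symm (fun u hu => by simpa using hY u hu) σ.symm.injective.injOn
      _ = n - 1 - σ.symm v := Fin.card_Ioi _
  omega

theorem not_existsUnique_mem_flagBlocker (hσ : Avoids123 σ) {m t : ℕ} (hmn : m ≤ n)
    (ht : t + 1 ≤ m) {i : Fin n} (hi : n - t ≤ (i : ℕ)) (hσi : m ≤ (σ i : ℕ)) :
    ¬ ∃! k, (k, σ k) ∈ FlagBlocker n m t := by
  set T := flagBandAbove n m t σ
  obtain ⟨a, ha, b, hb, hba, htop⟩ :=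
    exists_lt_forall_lt_imp_eq (two_le_card_flagBandAbove hmn ht hi hσi)
  have hit : ∀ v ∈ T, b ≤ v → (σ.symm v, σ (σ.symm v)) ∈ FlagBlocker n m t := by
    intro v hv hbv
    have habove : #(T.filter (v < ·)) ≤ 1 :=
      calc _ ≤ #{a} := card_le_card fun u hu =>
            mem_singleton.2 (htop u (mem_filter.1 hu).1 (hbv.trans_lt (mem_filter.1 hu).2))
        _ = 1 := card_singleton a
    have hrow : (σ.symm v : ℕ) + m + 1 ≤ n + #(T.filter (v < ·)) :=
      hσ.symm_add_le_of_mem_flagBandAbove hmn hi hσi hv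
    exact mem_flagBlocker_of_mem_flagBandAbove hv (by omega)
  rintro ⟨k, -, huniq⟩
  exact hba.ne <| σ.symm.injective <|
    (huniq _ (hit b hb le_rfl)).trans (huniq _ (hit a ha hba.le)).symm

end Avoids123

/-- Rows `n - t + 1, …, n` and columns `m + 1, …, n` (1-indexed). -/
def flagCorner (n m t : ℕ) : Finset (Fin n × Fin n) :=
  (univ.filter fun i : Fin n => n - t ≤ (i : ℕ)) ×ˢ (univ.filter fun j : Fin n => m ≤ (j : ℕ))

theorem mem_flagCorner {n m t : ℕ} {p : Fin n × Fin n} :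
    p ∈ flagCorner n m t ↔ n - t ≤ (p.1 : ℕ) ∧ m ≤ (p.2 : ℕ) := by
  simp [flagCorner]

theorem card_flagCorner {n m t : ℕ} (htn : t ≤ n) : #(flagCorner n m t) = t * (n - m) := by
  rw [flagCorner, card_product, Fin.card_filter_le_val, Fin.card_filter_le_val,
    Nat.sub_sub_self htn]

theorem flagBlocker_dim_upper_bound_general (n m t : ℕ) (hmn : m ≤ n)
    (ht : t + 1 ≤ m) (N : ℕ) (σ : Fin N → Equiv.Perm (Fin n))
    (havoid : ∀ a, Avoids123 (σ a))
    (honce : ∀ a, ∃! i : Fin n, (i, σ a i) ∈ FlagBlocker n m t)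
    (hli : LinearIndependent ℝ fun a => permMatrix n (σ a)) :
    N + t * (n - m) ≤ (n - 1) ^ 2 + 1 := by
  have hvanish : ∀ a, ∀ p ∈ flagCorner n m t, permMatrix n (σ a) p.1 p.2 = 0 := by
    intro a p hp
    rw [mem_flagCorner] at hp
    refine if_neg fun hij => (havoid a).not_existsUnique_mem_flagBlocker hmn ht hp.1 ?_ (honce a)
    rw [hij]
    exact hp.2
  have hcorner : ∀ p ∈ flagCorner n m t, p.1 ≠ ⟨0, by omega⟩ ∧ p.2 ≠ ⟨0, by omega⟩ := by
    intro p hp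
    rw [mem_flagCorner] at hp
    simp only [ne_eq, Fin.ext_iff]
    omega
  have h := card_add_card_le_of_linearIndependent _ _ hcorner hli
    (fun a => permMatrix_sum_row (σ a)) (fun a => permMatrix_sum_col (σ a)) hvanish
  rwa [Fintype.card_fin, Fintype.card_fin, card_flagCorner (by omega)] at h

/-- any `ℝ`-linearly independent family of permutation matrices
of `123`-avoiding permutations each meeting `B_n(m,t)` exactly once has size
at most `(n-1)² + 1 - t(n-m)`. -/
theorem flagBlocker_dim_upper_bound (n m t : ℕ) (hm1 : 1 ≤ m) (hmn : m ≤ n)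
    (ht : t + 1 ≤ m) (N : ℕ) (σ : Fin N → Equiv.Perm (Fin n))
    (havoid : ∀ a, Avoids123 (σ a))
    (honce : ∀ a, ∃! i : Fin n, (i, σ a i) ∈ FlagBlocker n m t)
    (hli : LinearIndependent ℝ fun a => permMatrix n (σ a)) :
    N + t * (n - m) ≤ (n - 1) ^ 2 + 1 :=
  flagBlocker_dim_upper_bound_general n m t hmn ht N σ havoid honce hli
end

section
/- Let n ≥ 1 and let B be the blocker consisting of all n positions of a single row (B = {(r, j) : 1 ≤ j ≤ n} for some fixed r) or of a single column (B = {(i, c) : 1 ≤ i ≤ n} for some fixed c) of an n×n matrix. Then there exist (n−1)² + 1 permutation matrices of 123-avoiding permutations of {1,…,n} that are linearly independent over ℝ and each of which intersects B exactly once. -/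
/-!
A permutation meets a full row or a full column exactly once, so only the independence needs an
argument. For a position `(i, j)` of an `(m+1) × (m+1)` matrix, `revInsert i j` sends `i` to `j`
and is decreasing elsewhere, hence is `123`-avoiding; its other entries lie on the antidiagonals
`k + l ∈ {m-1, m, m+1}`, and on `m-1` only if `i + j > m`. Take as pivots the `m²` positions off
the antidiagonals `m` and `m+1`, together with `(0, m)` (whose permutation is the reversal).
Ranking pivots beyond antidiagonal `m+1` lowest, then those before antidiagonal `m`, then `(0, m)`,
each permutation matrix vanishes at every other pivot of rank at most its own, so the family is
triangular and hence independent.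
-/

theorem linearIndependent_of_triangular {ι R M α : Type*} [Ring R] [NoZeroDivisors R]
    [AddCommGroup M] [Module R M] [Preorder α] [WellFoundedLT α]
    (v : ι → M) (φ : ι → M →ₗ[R] R) (r : ι → α) (hdiag : ∀ a, φ a (v a) ≠ 0)
    (htri : ∀ a b, b ≠ a → φ a (v b) ≠ 0 → r b < r a) :
    LinearIndependent R v := by
  rw [linearIndependent_iff']
  intro s c hsum a
  induction a using (InvImage.wf r wellFounded_lt).induction with
  | _ a ih =>
    intro ha
    have hφ : ∑ b ∈ s, c b * φ a (v b) = 0 := by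
      simpa only [map_sum, map_smul, smul_eq_mul, map_zero] using congrArg (φ a) hsum
    rw [Finset.sum_eq_single_of_mem a ha] at hφ
    · exact (mul_eq_zero.mp hφ).resolve_right (hdiag a)
    · intro b hb hba
      by_cases hab : φ a (v b) = 0
      · rw [hab, mul_zero]
      · rw [ih b (htri a b hba hab) hb, zero_mul]

theorem linearIndependent_permMatrix_of_triangular {ι α : Type*} [Preorder α] [WellFoundedLT α]
    {n : ℕ} (σ : ι → Equiv.Perm (Fin n)) (g : ι → Fin n × Fin n) (r : ι → α)
    (hdiag : ∀ a, σ a (g a).1 = (g a).2)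
    (htri : ∀ a b, b ≠ a → σ b (g a).1 = (g a).2 → r b < r a) :
    LinearIndependent ℝ fun a => permMatrix n (σ a) :=
  linearIndependent_of_triangular _ (fun a => Matrix.entryLinearMap ℝ ℝ (g a).1 (g a).2) r
    (fun a => by simp [permMatrix, hdiag])
    (fun a b hba h => htri a b hba (by simpa [permMatrix] using h))

theorem avoids123_of_strictAntiOn_compl {n : ℕ} (σ : Equiv.Perm (Fin n)) (p : Fin n)
    (h : StrictAntiOn σ {p}ᶜ) : Avoids123 σ := by
  intro x y z hxy hyz hσxy hσyz
  by_cases hy : y = p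
  · subst hy
    exact lt_asymm (hσxy.trans hσyz) (h hxy.ne hyz.ne' (hxy.trans hyz))
  · by_cases hx : x = p
    · subst hx
      exact lt_asymm hσyz (h hy (hxy.trans hyz).ne' hyz)
    · exact lt_asymm hσxy (h hx hy hxy)

theorem Fin.val_succAbove {m : ℕ} (p : Fin (m + 1)) (t : Fin m) :
    (p.succAbove t : ℕ) = if (t : ℕ) < p then (t : ℕ) else t + 1 := by
  split_ifs with h
  · rw [Fin.succAbove_of_castSucc_lt _ _ h, Fin.val_castSucc]
  · rw [Fin.succAbove_of_le_castSucc _ _ (not_lt.mp h), Fin.val_succ]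

def revInsert {m : ℕ} (i j : Fin (m + 1)) : Equiv.Perm (Fin (m + 1)) :=
  (finSuccEquiv' i).trans ((Equiv.optionCongr Fin.revPerm).trans (finSuccEquiv' j).symm)

section revInsert

variable {m : ℕ} (i j : Fin (m + 1))

@[simp]
theorem revInsert_apply_self : revInsert i j i = j := by
  simp [revInsert]

@[simp]
theorem revInsert_apply_succAbove (t : Fin m) :
    revInsert i j (i.succAbove t) = j.succAbove t.rev := by
  simp [revInsert]

theorem revInsert_strictAntiOn : StrictAntiOn (revInsert i j) {i}ᶜ := by
  intro k hk l hl hkl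
  obtain ⟨t, rfl⟩ := Fin.exists_succAbove_eq hk
  obtain ⟨u, rfl⟩ := Fin.exists_succAbove_eq hl
  simpa [Fin.succAbove_lt_succAbove_iff] using hkl

theorem revInsert_avoids123 : Avoids123 (revInsert i j) :=
  avoids123_of_strictAntiOn_compl _ i (revInsert_strictAntiOn i j)

theorem revInsert_antidiag {k : Fin (m + 1)} (hk : k ≠ i) :
    m ≤ (k : ℕ) + revInsert i j k + 1 ∧ (k : ℕ) + revInsert i j k ≤ m + 1 ∧
      ((k : ℕ) + revInsert i j k + 1 = m → m < (i : ℕ) + j) := by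
  obtain ⟨t, rfl⟩ := Fin.exists_succAbove_eq hk
  rw [revInsert_apply_succAbove, Fin.val_succAbove, Fin.val_succAbove, Fin.val_rev]
  have := t.isLt
  split_ifs <;> omega

end revInsert

def pivot {m : ℕ} (p : Fin m × Fin m) : Fin (m + 1) × Fin (m + 1) :=
  if (p.1 : ℕ) + p.2 < m then (p.1.castSucc, p.2.castSucc) else (p.1.succ, p.2.succ)

theorem pivot_antidiag {m : ℕ} (p : Fin m × Fin m) :
    ((pivot p).1 : ℕ) + (pivot p).2 < m ∨ m + 2 ≤ ((pivot p).1 : ℕ) + (pivot p).2 := by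
  unfold pivot
  split_ifs with h
  · exact Or.inl h
  · simp only [Fin.val_succ]; omega

theorem pivot_injective {m : ℕ} : Function.Injective (pivot (m := m)) := by
  intro p q h
  have h1 := congrArg (fun x => (x.1 : ℕ)) h
  have h2 := congrArg (fun x => (x.2 : ℕ)) h
  simp only [pivot] at h1 h2
  split_ifs at h1 h2 <;> simp only [Fin.val_castSucc, Fin.val_succ] at h1 h2 <;>
    exact Prod.ext (Fin.ext (by omega)) (Fin.ext (by omega))

def antidiagRank (m s : ℕ) : ℕ :=
  if s = m then 2 else if s < m then 1 else 0

theorem exists_avoids123_linearIndependent (m : ℕ) :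
    ∃ σ : Fin (m ^ 2 + 1) → Equiv.Perm (Fin (m + 1)),
      (∀ a, Avoids123 (σ a)) ∧ LinearIndependent ℝ fun a => permMatrix (m + 1) (σ a) := by
  let g : Option (Fin m × Fin m) → Fin (m + 1) × Fin (m + 1) :=
    fun a => a.elim (0, Fin.last m) pivot
  have hg : Function.Injective g := by
    rintro (_ | p) (_ | q) h
    · rfl
    · have := pivot_antidiag q
      simp only [g, Option.elim_none, Option.elim_some] at h
      simp [← h] at this
    · have := pivot_antidiag p
      simp only [g, Option.elim_none, Option.elim_some] at h
      simp [h] at this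
    · exact congrArg some (pivot_injective h)
  have hs : ∀ a, (a = none ∧ ((g a).1 : ℕ) + (g a).2 = m) ∨
      ((g a).1 : ℕ) + (g a).2 < m ∨ m + 2 ≤ ((g a).1 : ℕ) + (g a).2 := by
    rintro (_ | p)
    · exact Or.inl ⟨rfl, by simp [g]⟩
    · exact Or.inr (pivot_antidiag p)
  have hli : LinearIndependent ℝ fun a => permMatrix (m + 1) (revInsert (g a).1 (g a).2) := by
    refine linearIndependent_permMatrix_of_triangular _ g
      (fun a => antidiagRank m ((g a).1 + (g a).2)) (fun a => revInsert_apply_self _ _) ?_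
    intro a b hba hhit
    by_cases hrow : (g a).1 = (g b).1
    · rw [hrow, revInsert_apply_self] at hhit
      exact absurd (hg (Prod.ext hrow.symm hhit)) hba
    obtain ⟨hlo, hhi, hbelow⟩ := revInsert_antidiag (g b).1 (g b).2 hrow
    rw [hhit] at hlo hhi hbelow
    unfold antidiagRank
    rcases hs a with ⟨rfl, ha⟩ | ha <;> rcases hs b with ⟨rfl, hb⟩ | hb
    · exact absurd rfl hba
    all_goals split_ifs <;> omega
  let e : Fin (m ^ 2 + 1) ≃ Option (Fin m × Fin m) := Fintype.equivOfCardEq (by simp [sq])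
  exact ⟨fun a => revInsert (g (e a)).1 (g (e a)).2, fun a => revInsert_avoids123 _ _,
    hli.comp e e.injective⟩

theorem row_col_blocker_full_dim_general (n : ℕ)
    (B : Set (Fin n × Fin n))
    (hB : (∃ r : Fin n, B = {p | p.1 = r}) ∨ (∃ c : Fin n, B = {p | p.2 = c})) :
    ∃ σ : Fin ((n - 1) ^ 2 + 1) → Equiv.Perm (Fin n),
      (∀ a, Avoids123 (σ a)) ∧
      (∀ a, ∃! i : Fin n, (i, σ a i) ∈ B) ∧
      LinearIndependent ℝ fun a => permMatrix n (σ a) := by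
  obtain ⟨m, rfl⟩ : ∃ m, n = m + 1 := by
    rcases hB with ⟨r, -⟩ | ⟨c, -⟩
    exacts [Nat.exists_eq_add_one.mpr r.pos, Nat.exists_eq_add_one.mpr c.pos]
  rw [Nat.add_sub_cancel]
  obtain ⟨σ, havoid, hli⟩ := exists_avoids123_linearIndependent m
  refine ⟨σ, havoid, fun a => ?_, hli⟩
  rcases hB with ⟨r, rfl⟩ | ⟨c, rfl⟩
  · exact ⟨r, rfl, fun _ h => h⟩
  · exact (σ a).bijective.existsUnique c

/-- for the blocker consisting of a full row or a full column of
an `n × n` matrix, there exist `(n-1)² + 1` linearly independent permutation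
matrices of `123`-avoiding permutations, each meeting the blocker exactly
once. -/
theorem row_col_blocker_full_dim (n : ℕ) (hn : 1 ≤ n)
    (B : Set (Fin n × Fin n))
    (hB : (∃ r : Fin n, B = {p | p.1 = r}) ∨ (∃ c : Fin n, B = {p | p.2 = c})) :
    ∃ σ : Fin ((n - 1) ^ 2 + 1) → Equiv.Perm (Fin n),
      (∀ a, Avoids123 (σ a)) ∧
      (∀ a, ∃! i : Fin n, (i, σ a i) ∈ B) ∧
      LinearIndependent ℝ fun a => permMatrix n (σ a) :=
  row_col_blocker_full_dim_general n B hB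
end

section
/- Let n ≥ 1 and let r, s be positive integers with r + s = n + 1, and let L_n(s,r) = {(1, j) : n − s + 1 ≤ j ≤ n} ∪ {(i, n) : 1 ≤ i ≤ r} be the L-shaped blocker (a set of n positions). Then there exist (n−1)² permutation matrices of 123-avoiding permutations of {1,…,n} that are linearly independent over ℝ and each of which intersects L_n(s,r) exactly once. -/
/-!
A permutation matrix with `σ 0 = n - 1` is, after deleting its first row and last column, an
arbitrary permutation matrix of size `n - 1`. So `(n - 2)² + 1` independent `123`-avoiding
matrices of size `n - 1` lift to independent ones of size `n`, all vanishing on the border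
`{(0, j) : j < n - 1} ∪ {(i, n - 1) : 0 < i}`. To them we add `2n - 3` explicit `123`-avoiding
permutations with exactly two border cells each; read as edges between border cells they form a
path, so their border parts are independent and the `(n - 1)² + 1` matrices together are too.

The lifts meet `L_n(s, r)` only in the corner `(0, n - 1)`. Along the path the border cells
alternate between lying in `L_n(s, r)` and not, except for one pair of consecutive cells that
both lie in it, so all path permutations but at most one meet `L_n(s, r)` exactly once.
-/

namespace Equiv.Perm

variable {m n : ℕ}

def liftTop (τ : Perm (Fin m)) : Perm (Fin (m + 1)) :=
  (finSuccEquiv m).trans ((optionCongr τ).trans finSuccEquivLast.symm)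

@[simp] lemma liftTop_zero (τ : Perm (Fin m)) : liftTop τ 0 = Fin.last m := by
  simp [liftTop]

@[simp] lemma liftTop_succ (τ : Perm (Fin m)) (i : Fin m) :
    liftTop τ i.succ = (τ i).castSucc := by
  simp [liftTop]

lemma avoids123_liftTop {τ : Perm (Fin m)} (hτ : Avoids123 τ) : Avoids123 (liftTop τ) := by
  intro i j k hij hjk hσij hσjk
  cases i using Fin.cases with
  | zero => exact absurd hσij (by simpa using Fin.le_last _)
  | succ i =>
    cases j using Fin.cases with
    | zero => simp at hij
    | succ j =>
      cases k using Fin.cases with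
      | zero => simp at hjk
      | succ k =>
        simp only [liftTop_succ, Fin.castSucc_lt_castSucc_iff, Fin.succ_lt_succ_iff] at *
        exact hτ i j k hij hjk hσij hσjk

/-- In one-line notation: `b, b - 1, …, 0, n - 1, n - 2, …, b + 1`. -/
def reverseTwoBlocks (b : Fin n) : Perm (Fin n) :=
  Function.Involutive.toPerm
    (fun i => ⟨if (i : ℕ) ≤ b then (b : ℕ) - i else n + b - i, by split_ifs <;> omega⟩)
    (fun i => by ext; dsimp only; split_ifs <;> omega)

lemma val_reverseTwoBlocks (b i : Fin n) :
    (reverseTwoBlocks b i : ℕ) = if (i : ℕ) ≤ b then (b : ℕ) - i else n + b - i := rfl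

lemma avoids123_reverseTwoBlocks (b : Fin n) : Avoids123 (reverseTwoBlocks b) := by
  intro i j k hij hjk hσij hσjk
  simp only [Fin.lt_def, val_reverseTwoBlocks] at *
  split_ifs at hσij hσjk <;> omega

/-- In one-line notation: `b, b - 1, …, 1, n - 1, n - 2, …, b + 1, 0`. -/
noncomputable def reverseTwoBlocksCycle (b : Fin n) : Perm (Fin n) :=
  Equiv.ofBijective
    (fun i => ⟨if (i : ℕ) < b then (b : ℕ) - i else if (i : ℕ) + 1 = n then 0 else n + b - 1 - i,
      by split_ifs <;> omega⟩)
    (Finite.injective_iff_bijective.mp fun i j hij => by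
      ext
      have := congrArg Fin.val hij
      dsimp only at this
      split_ifs at this <;> omega)

lemma val_reverseTwoBlocksCycle (b i : Fin n) :
    (reverseTwoBlocksCycle b i : ℕ) =
      if (i : ℕ) < b then (b : ℕ) - i else if (i : ℕ) + 1 = n then 0 else n + b - 1 - i := rfl

lemma avoids123_reverseTwoBlocksCycle (b : Fin n) : Avoids123 (reverseTwoBlocksCycle b) := by
  intro i j k hij hjk hσij hσjk
  simp only [Fin.lt_def, val_reverseTwoBlocksCycle] at *
  split_ifs at hσij hσjk <;> omega

end Equiv.Perm

theorem LinearIndependent.sum_elim_of_map_eq_zero {R M N ι κ : Type*} [Ring R]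
    [AddCommGroup M] [Module R M] [AddCommGroup N] [Module R N]
    {v : ι → M} {w : κ → M} (f : M →ₗ[R] N) (hv : LinearIndependent R v)
    (hfv : ∀ i, f (v i) = 0) (hfw : LinearIndependent R (f ∘ w)) :
    LinearIndependent R (Sum.elim v w) :=
  hv.sum_type hfw.of_comp <| (Submodule.range_ker_disjoint hfw).symm.mono_left <|
    Submodule.span_le.2 <| Set.range_subset_iff.2 hfv

/-- Incidence vectors of the edges of the path `x₀ - y₀ - x₁ - y₁ - ⋯ - xₘ - yₘ`, where the `xᵢ`
and the `yᵢ` are the standard basis vectors of the two factors. -/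
def pathFamily (R : Type*) [Ring R] (m : ℕ) :
    Fin (m + 1) ⊕ Fin m → (Fin (m + 1) → R) × (Fin (m + 1) → R) :=
  Sum.elim (fun b => (Pi.single b 1, Pi.single b 1))
    (fun j => (Pi.single j.succ 1, Pi.single j.castSucc 1))

lemma linearIndependent_pathFamily (R : Type*) [Ring R] (m : ℕ) :
    LinearIndependent R (pathFamily R m) := by
  rw [Fintype.linearIndependent_iff]
  intro g hg
  have hfst x : ∑ i, g i * (pathFamily R m i).1 x = 0 := by
    simpa [Prod.fst_sum, Finset.sum_apply] using congrArg (fun p => p.1 x) hg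
  have hsnd x : ∑ i, g i * (pathFamily R m i).2 x = 0 := by
    simpa [Prod.snd_sum, Finset.sum_apply] using congrArg (fun p => p.2 x) hg
  simp only [pathFamily, Fintype.sum_sum_type, Sum.elim_inl, Sum.elim_inr, Pi.single_apply,
    mul_ite, mul_one, mul_zero] at hfst hsnd
  have h0 : g (.inl 0) = 0 := by simpa [fun j : Fin m => (Fin.succ_ne_zero j).symm] using hfst 0
  have hsucc j : g (.inl j.succ) + g (.inr j) = 0 := by simpa using hfst j.succ
  have hcast j : g (.inl j.castSucc) + g (.inr j) = 0 := by simpa using hsnd j.castSucc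
  have hinl : ∀ b, g (.inl b) = 0 := Fin.induction h0 fun j hj => by
    simpa [hj] using (hsucc j).trans (hcast j).symm
  rintro (b | j)
  · exact hinl b
  · simpa [hinl] using hcast j

section Extension

variable {m : ℕ} {ι : Type*}

lemma linearIndependent_permMatrix_liftTop {F : ι → Equiv.Perm (Fin m)}
    (hF : LinearIndependent ℝ (permMatrix m ∘ F)) :
    LinearIndependent ℝ (permMatrix (m + 1) ∘ Equiv.Perm.liftTop ∘ F) := by
  let restrict : Matrix (Fin (m + 1)) (Fin (m + 1)) ℝ →ₗ[ℝ] Matrix (Fin m) (Fin m) ℝ :=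
    { toFun M := M.submatrix Fin.succ Fin.castSucc
      map_add' _ _ := rfl
      map_smul' _ _ := rfl }
  refine LinearIndependent.of_comp restrict ?_
  convert hF using 1
  funext a
  ext i j
  show (if (F a).liftTop i.succ = j.castSucc then (1 : ℝ) else 0) = if F a i = j then 1 else 0
  simp

variable (m) in
@[simps]
def matrixBorder :
    Matrix (Fin (m + 2)) (Fin (m + 2)) ℝ →ₗ[ℝ] (Fin (m + 1) → ℝ) × (Fin (m + 1) → ℝ) where
  toFun M := (fun j => M 0 j.castSucc, fun i => M i.succ (Fin.last _))
  map_add' _ _ := rfl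
  map_smul' _ _ := rfl

lemma matrixBorder_permMatrix_liftTop (τ : Equiv.Perm (Fin (m + 1))) :
    matrixBorder m (permMatrix (m + 2) τ.liftTop) = 0 := by
  ext j
  · simp [permMatrix, (Fin.castSucc_ne_last j).symm]
  · simp [permMatrix, Fin.castSucc_ne_last]

variable (m) in
noncomputable def borderPerm : Fin (m + 1) ⊕ Fin m → Equiv.Perm (Fin (m + 2)) :=
  Sum.elim (fun b => Equiv.Perm.reverseTwoBlocks b.castSucc)
    (fun j => Equiv.Perm.reverseTwoBlocksCycle j.succ.castSucc)

lemma matrixBorder_permMatrix_borderPerm :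
    matrixBorder m ∘ permMatrix (m + 2) ∘ borderPerm m = pathFamily ℝ m := by
  funext a
  rcases a with b | j <;> ext x <;>
    simp only [matrixBorder_apply, borderPerm, pathFamily, permMatrix, Function.comp_apply,
      Sum.elim_inl, Sum.elim_inr, Pi.single_apply, Fin.ext_iff, Equiv.Perm.val_reverseTwoBlocks,
      Equiv.Perm.val_reverseTwoBlocksCycle, Fin.val_castSucc, Fin.val_succ, Fin.val_zero,
      Fin.val_last] <;>
    grind

noncomputable def extendFamily (F : ι → Equiv.Perm (Fin (m + 1))) :
    ι ⊕ (Fin (m + 1) ⊕ Fin m) → Equiv.Perm (Fin (m + 2)) :=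
  Sum.elim (Equiv.Perm.liftTop ∘ F) (borderPerm m)

lemma avoids123_extendFamily {F : ι → Equiv.Perm (Fin (m + 1))} (hF : ∀ a, Avoids123 (F a))
    (a : ι ⊕ (Fin (m + 1) ⊕ Fin m)) : Avoids123 (extendFamily F a) := by
  rcases a with a | b | j
  · exact Equiv.Perm.avoids123_liftTop (hF a)
  · exact Equiv.Perm.avoids123_reverseTwoBlocks _
  · exact Equiv.Perm.avoids123_reverseTwoBlocksCycle _

lemma linearIndependent_extendFamily {F : ι → Equiv.Perm (Fin (m + 1))}
    (hF : LinearIndependent ℝ (permMatrix (m + 1) ∘ F)) :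
    LinearIndependent ℝ (permMatrix (m + 2) ∘ extendFamily F) := by
  rw [extendFamily, Sum.comp_elim]
  refine (linearIndependent_permMatrix_liftTop hF).sum_elim_of_map_eq_zero (matrixBorder m)
    (fun a => matrixBorder_permMatrix_liftTop (F a)) ?_
  rw [matrixBorder_permMatrix_borderPerm]
  exact linearIndependent_pathFamily ℝ m

variable (m) in
lemma card_extendFamily_index :
    Fintype.card (Fin (m ^ 2 + 1) ⊕ (Fin (m + 1) ⊕ Fin m)) = (m + 1) ^ 2 + 1 := by
  simp only [Fintype.card_sum, Fintype.card_fin]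
  ring

end Extension

lemma exists_linearIndependent_avoids123 (m : ℕ) :
    ∃ F : Fin (m ^ 2 + 1) → Equiv.Perm (Fin (m + 1)),
      (∀ a, Avoids123 (F a)) ∧ LinearIndependent ℝ (permMatrix (m + 1) ∘ F) := by
  induction m with
  | zero =>
    refine ⟨fun _ => 1, fun _ i j k hij hjk => by omega, ?_⟩
    have : Unique (Fin (0 ^ 2 + 1)) := inferInstanceAs (Unique (Fin 1))
    refine linearIndependent_unique_iff.2 fun h => ?_
    simpa [permMatrix] using congrFun (congrFun h 0) 0
  | succ m ih =>
    obtain ⟨F, hFavoid, hFind⟩ := ih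
    let e := (Fintype.equivFinOfCardEq (card_extendFamily_index m)).symm
    exact ⟨extendFamily F ∘ e, fun a => avoids123_extendFamily hFavoid (e a),
      (linearIndependent_extendFamily hFind).comp e e.injective⟩

/-- The blocker `L_n(s, r)` in `0`-based coordinates. -/
def LBlocker (n r s : ℕ) : Set (Fin n × Fin n) :=
  {p | ((p.1 : ℕ) = 0 ∧ n ≤ (p.2 : ℕ) + s) ∨ ((p.2 : ℕ) + 1 = n ∧ (p.1 : ℕ) + 1 ≤ r)}

/-- The only cells of `σ` that can lie in `L_n(s, r)` are `(0, σ 0)`, which does when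
`r ≤ σ 0 + 1`, and `(k, n - 1)`, which does when `k < r`. -/
lemma existsUnique_mem_LBlocker {m r s : ℕ} (hrs : r + s = m + 2) (σ : Equiv.Perm (Fin (m + 1)))
    (k : Fin (m + 1)) (hk : σ k = Fin.last m) (hσ : k = 0 ∨ (r ≤ σ 0 + 1 ↔ r ≤ k)) :
    ∃! i, (i, σ i) ∈ LBlocker (m + 1) r s := by
  have hlast i : (σ i : ℕ) + 1 = m + 1 ↔ i = k := by
    rw [← σ.injective.eq_iff, hk, Fin.ext_iff, Fin.val_last]
    omega
  have hmem i : (i, σ i) ∈ LBlocker (m + 1) r s ↔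
      (i = 0 ∧ r ≤ σ 0 + 1) ∨ (i = k ∧ (k : ℕ) + 1 ≤ r) := by
    simp only [LBlocker, Set.mem_ofPred_eq, hlast, Fin.ext_iff (a := i) (b := 0), Fin.val_zero]
    grind
  rcases hσ with rfl | hσ
  · refine ⟨0, (hmem 0).2 ?_, fun i hi => ?_⟩
    · have : (σ 0 : ℕ) = m := by rw [hk, Fin.val_last]
      by_cases hr : r ≤ σ 0 + 1
      · exact .inl ⟨rfl, hr⟩
      · exact .inr ⟨rfl, by rw [Fin.val_zero]; omega⟩
    · rcases (hmem i).1 hi with ⟨rfl, -⟩ | ⟨rfl, -⟩ <;> rfl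
  by_cases hr : r ≤ σ 0 + 1
  · refine ⟨0, (hmem 0).2 (.inl ⟨rfl, hr⟩), fun i hi => ?_⟩
    rcases (hmem i).1 hi with ⟨rfl, -⟩ | ⟨-, hkr⟩
    · rfl
    · exact absurd (hσ.1 hr) (by omega)
  · refine ⟨k, (hmem k).2 (.inr ⟨rfl, by rw [hσ] at hr; omega⟩), fun i hi => ?_⟩
    rcases (hmem i).1 hi with ⟨-, hr'⟩ | ⟨rfl, -⟩
    · exact absurd hr' hr
    · rfl

section Blocker

variable {m r s : ℕ} (hrs : r + s = m + 3) {ι : Type*} (F : ι → Equiv.Perm (Fin (m + 1)))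
include hrs

lemma existsUnique_mem_LBlocker_extendFamily (a : ι ⊕ (Fin (m + 1) ⊕ Fin m))
    (ha : ∀ j, a = .inr (.inr j) → (j : ℕ) + 2 ≠ r) :
    ∃! i, (i, extendFamily F a i) ∈ LBlocker (m + 2) r s := by
  rcases a with a | b | j
  · exact existsUnique_mem_LBlocker hrs _ 0 (by simp [extendFamily]) (.inl rfl)
  · refine existsUnique_mem_LBlocker hrs _ b.succ ?_ (.inr ?_) <;>
      simp [extendFamily, borderPerm, Fin.ext_iff, Equiv.Perm.val_reverseTwoBlocks]
    omega
  · have := ha j rfl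
    have := j.isLt
    refine existsUnique_mem_LBlocker hrs _ j.succ.castSucc ?_ (.inr ?_) <;>
      simp [extendFamily, borderPerm, Fin.ext_iff, Equiv.Perm.val_reverseTwoBlocksCycle] <;>
      grind

lemma subsingleton_not_existsUnique_mem_LBlocker :
    {a | ¬ ∃! i, (i, extendFamily F a i) ∈ LBlocker (m + 2) r s}.Subsingleton := by
  have hbad a (ha : ¬ ∃! i, (i, extendFamily F a i) ∈ LBlocker (m + 2) r s) :
      ∃ j : Fin m, a = .inr (.inr j) ∧ (j : ℕ) + 2 = r := by
    by_contra! h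
    exact ha (existsUnique_mem_LBlocker_extendFamily hrs F a h)
  intro a ha a' ha'
  obtain ⟨j, rfl, hj⟩ := hbad a ha
  obtain ⟨j', rfl, hj'⟩ := hbad a' ha'
  rw [Fin.ext (by omega : (j : ℕ) = j')]

end Blocker

lemma exists_embedding_fin_of_subsingleton_setOf_not {ι : Type*} [Fintype ι] {p : ι → Prop}
    (h : {a | ¬ p a}.Subsingleton) {N : ℕ} (hN : N + 1 ≤ Fintype.card ι) :
    ∃ e : Fin N ↪ ι, ∀ k, p (e k) := by
  classical
  have hbad : Fintype.card {a // ¬ p a} ≤ 1 := Fintype.card_le_one_iff_subsingleton.2 h.coe_sort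
  have hgood : N ≤ Fintype.card {a // p a} := by
    have := Fintype.card_subtype_compl p
    omega
  obtain ⟨e⟩ := Function.Embedding.nonempty_of_card_le (α := Fin N) (β := {a // p a})
    (by rwa [Fintype.card_fin])
  exact ⟨e.trans (Function.Embedding.subtype p), fun k => (e k).2⟩

theorem lBlocker_dim_general (n r s : ℕ)
    (hrs : r + s = n + 1) :
    ∃ σ : Fin ((n - 1) ^ 2) → Equiv.Perm (Fin n),
      (∀ a, Avoids123 (σ a)) ∧
      (∀ a, ∃! i : Fin n, (i, σ a i) ∈
        ({p : Fin n × Fin n | ((p.1 : ℕ) = 0 ∧ n ≤ (p.2 : ℕ) + s) ∨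
          ((p.2 : ℕ) + 1 = n ∧ (p.1 : ℕ) + 1 ≤ r)} : Set (Fin n × Fin n))) ∧
      LinearIndependent ℝ fun a => permMatrix n (σ a) := by
  rcases Nat.lt_or_ge n 2 with hn | hn
  · have : IsEmpty (Fin ((n - 1) ^ 2)) := by
      rw [show (n - 1) ^ 2 = 0 by interval_cases n <;> rfl]
      infer_instance
    exact ⟨isEmptyElim, isEmptyElim, isEmptyElim, linearIndependent_empty_type⟩
  obtain ⟨m, rfl⟩ : ∃ m, n = m + 2 := ⟨n - 2, by omega⟩
  obtain ⟨F, hFavoid, hFind⟩ := exists_linearIndependent_avoids123 m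
  obtain ⟨e, he⟩ := exists_embedding_fin_of_subsingleton_setOf_not
    (subsingleton_not_existsUnique_mem_LBlocker hrs F) (card_extendFamily_index m).ge
  exact ⟨extendFamily F ∘ e, fun a => avoids123_extendFamily hFavoid (e a), he,
    (linearIndependent_extendFamily hFind).comp e e.injective⟩

/-- the `L`-shaped blocker
`L_n(s,r) = {(1, j) : n - s + 1 ≤ j ≤ n} ∪ {(i, n) : 1 ≤ i ≤ r}`
(with `r + s = n + 1`, `1`-based coordinates) admits `(n-1)²` linearly
independent permutation matrices of `123`-avoiding permutations, each meeting
it exactly once. -/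
theorem lBlocker_dim (n r s : ℕ) (hr : 1 ≤ r) (hs : 1 ≤ s)
    (hrs : r + s = n + 1) :
    ∃ σ : Fin ((n - 1) ^ 2) → Equiv.Perm (Fin n),
      (∀ a, Avoids123 (σ a)) ∧
      (∀ a, ∃! i : Fin n, (i, σ a i) ∈
        ({p : Fin n × Fin n | ((p.1 : ℕ) = 0 ∧ n ≤ (p.2 : ℕ) + s) ∨
          ((p.2 : ℕ) + 1 = n ∧ (p.1 : ℕ) + 1 ≤ r)} : Set (Fin n × Fin n))) ∧
      LinearIndependent ℝ fun a => permMatrix n (σ a) :=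
  lBlocker_dim_general n r s hrs
end

section
/- Let n ≥ 1 and let B be a set of positions in {1,…,n} × {1,…,n} that is a blocker of all n×n 123-avoiding permutation matrices. Then |B| ≥ n. -/
/-!
For each `c : Fin n` the permutation `i ↦ c - i` (mod `n`) is `123`-avoiding: it decreases on
`[0, c]` and on `(c, n)`, so it can only increase when crossing `c`. These `n` permutations have
pairwise disjoint graphs, since `c` is recovered from any position `(i, c - i)` as row plus
column. A blocker picks one position from each graph, hence has at least `n` elements.
-/

lemma Fin.le_and_lt_of_sub_lt_sub {n : ℕ} {c x y : Fin n} (hxy : x < y) (h : c - x < c - y) :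
    x ≤ c ∧ c < y := by
  rw [Fin.lt_def] at h
  rcases le_or_gt x c with hx | hx <;> rcases le_or_gt y c with hy | hy
  · rw [Fin.sub_val_of_le hx, Fin.sub_val_of_le hy] at h; omega
  · exact ⟨hx, hy⟩
  · exact (lt_asymm hxy (hy.trans_lt hx)).elim
  · rw [Fin.coe_sub_iff_lt.2 hx, Fin.coe_sub_iff_lt.2 hy] at h; omega

lemma avoids123_subLeft {n : ℕ} [NeZero n] (c : Fin n) : Avoids123 (Equiv.subLeft c) := by
  intro i j k hij hjk hi hj
  have hjc := (Fin.le_and_lt_of_sub_lt_sub hij hi).2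
  have hcj := (Fin.le_and_lt_of_sub_lt_sub hjk hj).1
  exact absurd hcj (not_le.2 hjc)

/-- every blocker of all `n × n` `123`-avoiding permutation
matrices has at least `n` positions. -/
theorem blocker_card_ge (n : ℕ) (hn : 1 ≤ n) (B : Set (Fin n × Fin n))
    (hB : IsBlocker B) :
    n ≤ B.ncard := by
  have : NeZero n := ⟨by omega⟩
  choose row hrow using fun c : Fin n => hB _ (avoids123_subLeft c)
  have hinj : Set.InjOn (fun c => (row c, c - row c)) Set.univ := by
    intro a _ b _ hab
    obtain ⟨hrow_eq, hcol_eq⟩ := Prod.mk.inj hab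
    rwa [hrow_eq, sub_left_inj] at hcol_eq
  calc n = (Set.univ : Set (Fin n)).ncard := by simp
    _ ≤ B.ncard := Set.ncard_le_ncard_of_injOn _ (fun c _ => hrow c) hinj
end
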